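/- arXiv:1708.09821 — 6 statements merged into one kernel-verified Lean document; each statement's English description precedes it below -/
import Mathlib

section
/- Let Γ be a countably infinite group and let α be a free continuous action of Γ on a nonempty Polish space X which is generically smooth. Then for every subshift Ω ⊆ ℕ^Γ, the action α admits a Baire measurable Ω-coloring if and only if Ω is nonempty. -/
open Set Function Topology

namespace DescColor

/-- A set is *Baire measurable* if it differs from an open set by a meager set. -/
def BaireMSet {X : Type*} [TopologicalSpace X] (S : Set X) : Prop :=
  ∃ U : Set X, IsOpen U ∧ IsMeagre (symmDiff S U)

/-- A function is *Baire measurable* if preimages of measurable (Borel) sets are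
Baire measurable. -/
def BaireMFun {X Y : Type*} [TopologicalSpace X] [MeasurableSpace Y] (f : X → Y) : Prop :=
  ∀ B : Set Y, MeasurableSet B → BaireMSet (f ⁻¹' B)

variable {Γ : Type*}

/-- The shift action of `Γ` on colorings `Γ → ℕ`: `(γ · ω)(δ) = ω (δ γ)`. -/
def shift [Group Γ] (γ : Γ) (ω : Γ → ℕ) : Γ → ℕ := fun δ => ω (δ * γ)

/-- A subshift: a closed shift-invariant set of colorings. -/
def IsSubshift [Group Γ] (Ω : Set (Γ → ℕ)) : Prop :=
  IsClosed Ω ∧ ∀ (γ : Γ), ∀ ω ∈ Ω, shift γ ω ∈ Ω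

/-- The coding map `π_f(x)(γ) = f (γ • x)`. -/
def codingMap [Group Γ] {X : Type*} [MulAction Γ X] (f : X → ℕ) (x : X) : Γ → ℕ :=
  fun γ => f (γ • x)

/-- The action of `Γ` on `X` admits a Baire measurable `Ω`-coloring. -/
def HasBMColoring [Group Γ] (X : Type*) [TopologicalSpace X] [MulAction Γ X]
    (Ω : Set (Γ → ℕ)) : Prop :=
  ∃ f : X → ℕ, BaireMFun f ∧ {x : X | codingMap f x ∈ Ω} ∈ residual X

/-- The action of `Γ` on `X` is generically smooth. -/
def GenSmooth (Γ : Type*) [Group Γ] (X : Type*) [TopologicalSpace X] [MulAction Γ X] : Prop :=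
  ∃ f : X → ℝ, BaireMFun f ∧ ∀ x y : X, f x = f y ↔ ∃ γ : Γ, γ • x = y

/-- The shift action of `Γ` on `ℕ^Γ` admits a Baire measurable `Ω`-coloring. -/
def ShiftHasBMColoring (Γ : Type*) [Group Γ] (Ω : Set (Γ → ℕ)) : Prop :=
  ∃ f : (Γ → ℕ) → ℕ, BaireMFun f ∧
    {ω : Γ → ℕ | (fun γ : Γ => f (shift γ ω)) ∈ Ω} ∈ residual (Γ → ℕ)

/-- A free continuous action of `Γ` on a Polish space. -/
structure FreePolishAction (Γ : Type*) [Group Γ] where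
  X : Type
  ts : TopologicalSpace X
  polish : @PolishSpace X ts
  smul : Γ → X → X
  one_smul' : ∀ x, smul 1 x = x
  mul_smul' : ∀ γ δ x, smul (γ * δ) x = smul γ (smul δ x)
  cont : ∀ γ : Γ, @Continuous X X ts ts (smul γ)
  free : ∀ (γ : Γ) (x : X), smul γ x = x → γ = 1

/-- A free continuous action on a Polish space admits a Baire measurable `Ω`-coloring. -/
def FreePolishAction.HasBMCol [Group Γ] (α : FreePolishAction Γ) (Ω : Set (Γ → ℕ)) : Prop :=
  letI := α.ts
  ∃ f : α.X → ℕ, BaireMFun f ∧ {x : α.X | (fun γ : Γ => f (α.smul γ x)) ∈ Ω} ∈ residual α.X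

/-- A free continuous action on a Polish space is generically smooth. -/
def FreePolishAction.IsGenSmooth [Group Γ] (α : FreePolishAction Γ) : Prop :=
  letI := α.ts
  ∃ f : α.X → ℝ, BaireMFun f ∧ ∀ x y : α.X, f x = f y ↔ ∃ γ : Γ, α.smul γ x = y

/-- A subshift is *hard* if every free continuous action of `Γ` on a Polish space that
admits a Baire measurable `Ω`-coloring is generically smooth. -/
def Hard (Γ : Type*) [Group Γ] (Ω : Set (Γ → ℕ)) : Prop :=
  ∀ α : FreePolishAction Γ, α.HasBMCol Ω → α.IsGenSmooth

/-- A subshift is *easy* if every free continuous action of `Γ` on a Polish space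
admits a Baire measurable `Ω`-coloring. -/
def Easy (Γ : Type*) [Group Γ] (Ω : Set (Γ → ℕ)) : Prop :=
  ∀ α : FreePolishAction Γ, α.HasBMCol Ω

/-- Finite partial colorings of `Γ`: partial maps `Γ ⇀ ℕ` with finite domain. -/
abbrev FPC (Γ : Type*) : Type _ := {φ : Γ → Option ℕ // {γ : Γ | φ γ ≠ none}.Finite}

/-- The domain of a finite partial coloring. -/
def domP (φ : FPC Γ) : Set Γ := {γ : Γ | φ.1 γ ≠ none}

/-- `Fin(Ω)`: the set of finite partial colorings extending to an element of `Ω`. -/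
def FinOf (Ω : Set (Γ → ℕ)) : Set (FPC Γ) :=
  {φ | ∃ ω ∈ Ω, ∀ (γ : Γ) (c : ℕ), φ.1 γ = some c → ω γ = c}

/-- `g : FPC Γ → Bool` codes (the set `Fin(Ω)` of) the subshift `Ω`. -/
def CodesSubshift [Group Γ] (g : FPC Γ → Bool) (Ω : Set (Γ → ℕ)) : Prop :=
  IsSubshift Ω ∧ ∀ φ : FPC Γ, g φ = true ↔ φ ∈ FinOf Ω

/-- The shift action of `Γ` on finite partial colorings: `(γ · φ)(δ) = φ(δγ)`. -/
def shiftP [Group Γ] (γ : Γ) (φ : FPC Γ) : FPC Γ :=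
  ⟨fun δ => φ.1 (δ * γ), by
    apply (φ.2.image fun δ => δ * γ⁻¹).subset
    intro δ hδ
    exact ⟨δ * γ, hδ, by simp⟩⟩

/-- The empty partial coloring. -/
def emptyP (Γ : Type*) : FPC Γ := ⟨fun _ => none, by simp⟩

/-- The union (join) of two partial colorings (values of `φ` take precedence). -/
def joinP (φ ψ : FPC Γ) : FPC Γ :=
  ⟨fun δ => match φ.1 δ with | some c => some c | none => ψ.1 δ, by
    apply (φ.2.union ψ.2).subset
    intro δ hδ
    by_cases h : φ.1 δ = none
    · right
      simp only [mem_setOf_eq, h] at hδ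
      exact hδ
    · exact Or.inl h⟩

/-- The union of a finite list of partial colorings. -/
def joinList (l : List (FPC Γ)) : FPC Γ := l.foldr joinP (emptyP Γ)

/-- `φ[γ, r]`: the restriction of `φ` to the closed ball `B(γ, r)`. -/
noncomputable def restrictBall [MetricSpace Γ] (φ : FPC Γ) (γ : Γ) (r : ℝ) : FPC Γ :=
  ⟨fun δ => if dist γ δ ≤ r then φ.1 δ else none, by
    apply φ.2.subset
    intro δ hδ
    by_cases h : dist γ δ ≤ r
    · simp only [mem_setOf_eq, if_pos h] at hδ
      exact hδ
    · simp only [mem_setOf_eq, if_neg h] at hδ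
      exact absurd rfl hδ⟩

/-- `φ ∪ {(γ, c)}`. -/
def insertP [DecidableEq Γ] (φ : FPC Γ) (γ : Γ) (c : ℕ) : FPC Γ :=
  ⟨fun δ => if δ = γ then some c else φ.1 δ, by
    apply (φ.2.insert γ).subset
    intro δ hδ
    by_cases h : δ = γ
    · exact Or.inl h
    · right
      simp only [mem_setOf_eq, if_neg h] at hδ
      exact hδ⟩

/-- The restriction of a total coloring `ω` to a finite set `S`. -/
def restrictTo [DecidableEq Γ] (ω : Γ → ℕ) (S : Finset Γ) : FPC Γ :=
  ⟨fun δ => if δ ∈ S then some (ω δ) else none, by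
    apply S.finite_toSet.subset
    intro δ hδ
    by_cases h : δ ∈ S
    · exact h
    · simp only [mem_setOf_eq, if_neg h] at hδ
      exact absurd rfl hδ⟩

/-- Post-composition of a partial coloring with `ρ : ℕ → ℕ`. -/
def mapP (ρ : ℕ → ℕ) (φ : FPC Γ) : FPC Γ :=
  ⟨fun δ => (φ.1 δ).map ρ, by
    apply φ.2.subset
    intro δ hδ
    intro h
    simp only [mem_setOf_eq, h] at hδ
    exact hδ rfl⟩

/-- `ψ` is a restriction of `φ`. -/
def IsRestrictionOf (ψ φ : FPC Γ) : Prop := ∀ δ : Γ, ψ.1 δ = none ∨ ψ.1 δ = φ.1 δ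

/-- A `Γ`-ideal: a shift-invariant set of finite partial colorings closed under
restrictions. -/
def IsGammaIdeal [Group Γ] (P : Set (FPC Γ)) : Prop :=
  (∀ (γ : Γ), ∀ φ ∈ P, shiftP γ φ ∈ P) ∧
  (∀ φ ∈ P, ∀ ψ : FPC Γ, IsRestrictionOf ψ φ → ψ ∈ P)

/-- An extendable `Γ`-ideal. -/
def IsExtendable [DecidableEq Γ] (P : Set (FPC Γ)) : Prop :=
  ∀ φ ∈ P, ∀ γ : Γ, φ.1 γ = none → ∃ c : ℕ, insertP φ γ c ∈ P

/-- `φ` and `ψ` are `R`-separated: `dist(dom φ, dom ψ) > R φ + R ψ`. -/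
def RSeparated [MetricSpace Γ] (R : FPC Γ → ℝ) (φ ψ : FPC Γ) : Prop :=
  ∀ γ ∈ domP φ, ∀ δ ∈ domP ψ, R φ + R ψ < dist γ δ

/-- The join property of a `Γ`-ideal `P`. -/
def HasJoinProperty [Group Γ] [MetricSpace Γ] (P : Set (FPC Γ)) : Prop :=
  ∃ R : FPC Γ → ℝ, (∀ φ, 0 ≤ R φ) ∧ (∀ (γ : Γ), ∀ φ ∈ P, R (shiftP γ φ) = R φ) ∧
    ∀ l : List (FPC Γ), (∀ φ ∈ l, φ ∈ P) → l.Pairwise (RSeparated R) → joinList l ∈ P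

/-- `P^loc_r`: partial colorings that are `r`-locally in `P`. -/
def LocallyIn [MetricSpace Γ] (P : Set (FPC Γ)) (r : ℕ → ℝ) : Set (FPC Γ) :=
  {φ | ∀ (γ : Γ) (c : ℕ), φ.1 γ = some c → restrictBall φ γ (r c) ∈ P}

/-- A local `Γ`-ideal. -/
def IsLocal [MetricSpace Γ] (P : Set (FPC Γ)) : Prop :=
  ∃ r : ℕ → ℝ, (∀ c, 0 ≤ r c) ∧ P = LocallyIn P r

/-- `Col(P)`: colorings all of whose finite restrictions lie in `P`. -/
def ColOf [DecidableEq Γ] (P : Set (FPC Γ)) : Set (Γ → ℕ) :=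
  {ω | ∀ S : Finset Γ, restrictTo ω S ∈ P}

/-! ### The space of Baire measurable functions -/

/-- Baire measurable functions from `X` to `Y`. -/
abbrev BMFunSub (X Y : Type*) [TopologicalSpace X] [MeasurableSpace Y] :=
  {f : X → Y // BaireMFun f}

/-- Equality on a comeager set. -/
def BFunRel {X Y : Type*} [TopologicalSpace X] [MeasurableSpace Y]
    (f g : BMFunSub X Y) : Prop := {x : X | f.1 x = g.1 x} ∈ residual X

/-- `B(X,Y)`: Baire measurable functions modulo equality on a comeager set. -/
abbrev BFun (X Y : Type*) [TopologicalSpace X] [MeasurableSpace Y] :=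
  Quot (BFunRel (X := X) (Y := Y))

/-- `[U, A]`: the classes of functions `f` with `U ∖ f⁻¹(A)` meager. -/
def forceSet {X Y : Type*} [TopologicalSpace X] [MeasurableSpace Y]
    (U : Set X) (A : Set Y) : Set (BFun X Y) :=
  {F | ∃ f : BMFunSub X Y, Quot.mk BFunRel f = F ∧ IsMeagre (U \ f.1 ⁻¹' A)}

/-- `Σ(X,Y)`: the σ-algebra generated by the sets `[U, A]` for `U` nonempty open
and `A` Borel. -/
def SigmaXY (X Y : Type*) [TopologicalSpace X] [MeasurableSpace Y] :
    MeasurableSpace (BFun X Y) :=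
  MeasurableSpace.generateFrom
    {S | ∃ (U : Set X) (A : Set Y), IsOpen U ∧ U.Nonempty ∧ MeasurableSet A ∧ S = forceSet U A}

/-! A comeager set on which the orbit-separating map is continuous contains an invariant dense
`Gδ` set `C`. For `x ∈ C` the orbit of `x` is relatively closed in `C`, hence a countable `Gδ`
set, so by the Baire category theorem it has an isolated point, and some basic open set `V n`
meets the orbit in exactly one point `γ • x`. Taking the least such `n` gives a Baire measurable
selector `x ↦ γ(x)` with `γ(δ • x) = γ(x) * δ⁻¹`, and then `x ↦ ω (γ(x)⁻¹)` codes every point of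
`C` to a shift of a fixed `ω ∈ Ω`. -/

open Filter MulAction TopologicalSpace

section BaireMeasurable

variable {X : Type*} [TopologicalSpace X]

theorem baireMSet_iff {S : Set X} : BaireMSet S ↔ BaireMeasurableSet S := by
  have h : ∀ U : Set X, IsMeagre (symmDiff S U) ↔ S =ᵇ U := fun U => by
    rw [IsMeagre, eventuallyEq_set]
    refine Iff.of_eq (congrArg (· ∈ residual X) ?_)
    ext x
    simp only [Set.mem_compl_iff, Set.mem_symmDiff, Set.mem_ofPred_eq]
    tauto
  simp only [BaireMSet, h, BaireMeasurableSet.iff_residualEq_isOpen]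

theorem _root_.BaireMeasurableSet.of_inter_mem_residual {s A : Set X} (hA : A ∈ residual X)
    (h : BaireMeasurableSet (s ∩ A)) : BaireMeasurableSet s :=
  h.congr (inter_eventuallyEq_left.mpr (mem_of_superset hA fun _ hx _ => hx))

theorem baireMFun_comp_of_countable {Y Z : Type*} [Countable Y] [MeasurableSpace Z] {p : X → Y}
    (hp : ∀ y, BaireMeasurableSet (p ⁻¹' {y})) (h : Y → Z) : BaireMFun (h ∘ p) := by
  intro B _
  rw [baireMSet_iff, Set.preimage_comp, ← Set.biUnion_of_singleton (h ⁻¹' B),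
    Set.preimage_iUnion₂]
  exact .biUnion (Set.to_countable _) fun y _ => hp y

theorem BaireMFun.exists_isMeagre_continuousOn {Y : Type*} [TopologicalSpace Y]
    [SecondCountableTopology Y] [MeasurableSpace Y] [OpensMeasurableSpace Y] {g : X → Y}
    (hg : BaireMFun g) : ∃ M : Set X, IsMeagre M ∧ ContinuousOn g Mᶜ := by
  obtain ⟨b, hb⟩ := exists_seq_basis Y
  choose O hO hgO using fun n => hg (b n) (hb.isOpen ⟨n, rfl⟩).measurableSet
  refine ⟨⋃ n, symmDiff (g ⁻¹' b n) (O n), isMeagre_iUnion hgO, ?_⟩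
  rw [continuousOn_iff_continuous_domRestrict, hb.continuous_iff]
  rintro _ ⟨n, rfl⟩
  convert (hO n).preimage continuous_subtype_val using 1
  ext ⟨x, hx⟩
  have hxn : x ∉ symmDiff (g ⁻¹' b n) (O n) := fun h => hx (Set.mem_iUnion_of_mem n h)
  rw [Set.mem_symmDiff] at hxn
  show g x ∈ b n ↔ x ∈ O n
  tauto

end BaireMeasurable

theorem _root_.IsGδ.exists_isOpen_inter_eq_singleton {X : Type*} [TopologicalSpace X]
    [PolishSpace X] {O : Set X} (hG : IsGδ O) (hc : O.Countable) (hne : O.Nonempty) :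
    ∃ y ∈ O, ∃ W : Set X, IsOpen W ∧ W ∩ O = {y} := by
  let K := closure O
  have : PolishSpace K := isClosed_closure.polishSpace
  let s : Set K := Subtype.val ⁻¹' O
  have hsd : Dense s := by
    rw [IsInducing.subtypeVal.dense_iff]
    rintro ⟨x, hx⟩
    rwa [Subtype.image_preimage_coe, Set.inter_eq_right.mpr subset_closure]
  have : Countable s := (hc.preimage Subtype.val_injective).to_subtype
  obtain ⟨y₀, hy₀⟩ := hne
  have : Nonempty K := ⟨⟨y₀, subset_closure hy₀⟩⟩
  obtain ⟨x, hx⟩ := ((hG.preimage continuous_subtype_val).dense_iUnion_interior_of_closed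
    hsd (f := fun y : s => ({y.1} : Set K)) (fun _ => isClosed_singleton)
    (fun y hy => Set.mem_iUnion_of_mem ⟨y, hy⟩ rfl)).nonempty
  obtain ⟨y, hy⟩ := Set.mem_iUnion.mp hx
  have hyo : IsOpen ({y.1} : Set K) :=
    interior_eq_iff_isOpen.mp ((Set.Nonempty.subset_singleton_iff ⟨x, hy⟩).mp interior_subset)
  obtain ⟨W, hW, hWy⟩ := isOpen_induced_iff.mp hyo
  refine ⟨y.1.1, y.2, W, hW, Set.Subset.antisymm ?_ ?_⟩
  · rintro z ⟨hzW, hzO⟩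
    have : (⟨z, subset_closure hzO⟩ : K) ∈ ({y.1} : Set K) := hWy ▸ hzW
    exact congrArg Subtype.val this
  · rintro z rfl
    have hyW : y.1 ∈ Subtype.val ⁻¹' W := hWy ▸ rfl
    exact ⟨hyW, y.2⟩

section Action

variable {Γ X : Type*} [Group Γ] [MulAction Γ X] [TopologicalSpace X]

theorem exists_smul_invariant_isGδ_subset [Countable Γ] [ContinuousConstSMul Γ X] [BaireSpace X]
    {s : Set X} (hs : s ∈ residual X) :
    ∃ C ⊆ s, IsGδ C ∧ C ∈ residual X ∧ ∀ γ : Γ, ∀ x ∈ C, γ • x ∈ C := by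
  obtain ⟨D, hDs, hDG, hDd⟩ := mem_residual.mp hs
  refine ⟨⋂ γ : Γ, (γ • ·) ⁻¹' D, fun x hx => hDs (one_smul Γ x ▸ Set.mem_iInter.mp hx 1),
    .iInter fun γ => hDG.preimage (continuous_const_smul γ),
    countable_iInter_mem.mpr fun γ => tendsto_residual_of_isOpenMap (continuous_const_smul γ)
      (isOpenMap_smul γ) (residual_of_dense_Gδ hDG hDd), fun γ x hx => ?_⟩
  simp only [Set.mem_iInter, Set.mem_preimage, smul_smul] at hx ⊢
  exact fun δ => hx (δ * γ)

theorem closure_orbit_inter_subset {Y : Type*} [TopologicalSpace Y] [T1Space Y] {g : X → Y}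
    {C : Set X} (hgC : ContinuousOn g C) (hg : ∀ x y, g x = g y ↔ ∃ γ : Γ, γ • x = y) {x : X}
    (hx : orbit Γ x ⊆ C) : closure (orbit Γ x) ∩ C ⊆ orbit Γ x := by
  rintro z ⟨hzcl, hzC⟩
  have hconst : g '' orbit Γ x ⊆ {g x} := by
    rintro _ ⟨_, ⟨γ, rfl⟩, rfl⟩
    exact ((hg x _).mpr ⟨γ, rfl⟩).symm
  have hgz := closure_mono hconst (((hgC z hzC).mono hx).mem_closure_image hzcl)
  rw [closure_singleton, Set.mem_singleton_iff] at hgz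
  exact (hg x z).mp hgz.symm

theorem isGδ_orbit [PerfectlyNormalSpace X] {Y : Type*} [TopologicalSpace Y] [T1Space Y]
    {g : X → Y} {C : Set X} (hC : IsGδ C) (hgC : ContinuousOn g C) (hg : ∀ x y, g x = g y ↔ ∃ γ : Γ, γ • x = y) {x : X}
    (hx : orbit Γ x ⊆ C) : IsGδ (orbit Γ x) := by
  rw [← (closure_orbit_inter_subset hgC hg hx).antisymm fun y hy => ⟨subset_closure hy, hx hy⟩]
  exact isClosed_closure.isGδ.inter hC

theorem exists_existsUnique_smul_mem (hfree : ∀ (γ : Γ) (x : X), γ • x = x → γ = 1)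
    {V : ℕ → Set X} (hV : IsTopologicalBasis (Set.range V)) {x y : X} {W : Set X} (hW : IsOpen W)
    (hWx : W ∩ orbit Γ x = {y}) : ∃ n, ∃! γ : Γ, γ • x ∈ V n := by
  have hy : y ∈ W ∩ orbit Γ x := hWx ▸ rfl
  obtain ⟨γ₀, rfl⟩ := hy.2
  obtain ⟨_, ⟨n, rfl⟩, hyV, hVW⟩ := hV.exists_subset_of_mem_open hy.1 hW
  refine ⟨n, γ₀, hyV, fun γ hγ => ?_⟩
  have hγγ₀ : γ • x = γ₀ • x := by
    have h : γ • x ∈ W ∩ orbit Γ x := ⟨hVW hγ, γ, rfl⟩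
    rwa [hWx] at h
  have h1 := hfree (γ₀⁻¹ * γ) x (by rw [mul_smul, hγγ₀, inv_smul_smul])
  exact (inv_mul_eq_one.mp h1).symm

end Action

section Selector

variable (Γ : Type*) {X : Type*} [Group Γ] [MulAction Γ X] (V : ℕ → Set X)

def isolatingIndices (x : X) : Set ℕ := {n | ∃! γ : Γ, γ • x ∈ V n}

-- The `γ(x)` of the header; a junk value where `isolatingIndices Γ V x` is empty.
noncomputable def orbitSelector (x : X) : Γ :=
  Classical.epsilon fun γ : Γ => γ • x ∈ V (sInf (isolatingIndices Γ V x))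

variable {Γ V}

theorem isolatingIndices_smul (δ : Γ) (x : X) :
    isolatingIndices Γ V (δ • x) = isolatingIndices Γ V x := by
  ext n
  simp only [isolatingIndices, Set.mem_ofPred_eq, smul_smul]
  exact (Equiv.mulRight δ).existsUnique_congr_right (q := fun γ => γ • x ∈ V n)

theorem smul_mem_iff_eq_orbitSelector {x : X} (hx : (isolatingIndices Γ V x).Nonempty) {γ : Γ} :
    γ • x ∈ V (sInf (isolatingIndices Γ V x)) ↔ γ = orbitSelector Γ V x := by
  obtain ⟨γ₀, hγ₀, huniq⟩ := Nat.sInf_mem hx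
  have hsel : orbitSelector Γ V x • x ∈ V (sInf (isolatingIndices Γ V x)) :=
    Classical.epsilon_spec (p := fun γ : Γ => γ • x ∈ V (sInf (isolatingIndices Γ V x))) ⟨γ₀, hγ₀⟩
  exact ⟨fun h => (huniq γ h).trans (huniq _ hsel).symm, fun h => h ▸ hsel⟩

theorem orbitSelector_smul {x : X} (hx : (isolatingIndices Γ V x).Nonempty) (δ : Γ) :
    orbitSelector Γ V (δ • x) = orbitSelector Γ V x * δ⁻¹ := by
  have hδx : (isolatingIndices Γ V (δ • x)).Nonempty := (isolatingIndices_smul δ x).symm ▸ hx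
  rw [eq_comm, ← smul_mem_iff_eq_orbitSelector hδx, isolatingIndices_smul, smul_smul,
    inv_mul_cancel_right]
  exact (smul_mem_iff_eq_orbitSelector hx).mpr rfl

variable [TopologicalSpace X] [Countable Γ] [ContinuousConstSMul Γ X]

theorem baireMeasurableSet_setOf_mem_isolatingIndices (hV : ∀ n, IsOpen (V n)) (n : ℕ) :
    BaireMeasurableSet {x | n ∈ isolatingIndices Γ V x} := by
  have hpre : ∀ γ : Γ, BaireMeasurableSet ((γ • ·) ⁻¹' V n) := fun γ =>
    ((hV n).preimage (continuous_const_smul γ)).baireMeasurableSet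
  have : {x | n ∈ isolatingIndices Γ V x} =
      ⋃ γ : Γ, (γ • ·) ⁻¹' V n ∩ ⋂ δ ∈ ({γ}ᶜ : Set Γ), ((δ • ·) ⁻¹' V n)ᶜ := by
    ext x
    simp only [isolatingIndices, ExistsUnique, Set.mem_ofPred_eq, Set.mem_iUnion, Set.mem_inter_iff,
      Set.mem_preimage, Set.mem_iInter, Set.mem_compl_iff, Set.mem_singleton_iff]
    refine exists_congr fun γ => and_congr_right fun _ => forall_congr' fun δ => ?_
    tauto
  rw [this]
  exact .iUnion fun γ => (hpre γ).inter (.biInter (Set.to_countable _) fun δ _ => (hpre δ).compl)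

theorem baireMeasurableSet_orbitSelector_fiber (hV : ∀ n, IsOpen (V n)) (γ : Γ) :
    BaireMeasurableSet
      (orbitSelector Γ V ⁻¹' {γ} ∩ {x | (isolatingIndices Γ V x).Nonempty}) := by
  have : orbitSelector Γ V ⁻¹' {γ} ∩ {x | (isolatingIndices Γ V x).Nonempty} =
      ⋃ n, ({x | n ∈ isolatingIndices Γ V x} ∩ ⋂ m < n, {x | m ∉ isolatingIndices Γ V x}) ∩
        (γ • ·) ⁻¹' V n := by
    ext x
    simp only [Set.mem_inter_iff, Set.mem_preimage, Set.mem_singleton_iff, Set.mem_ofPred_eq,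
      Set.mem_iUnion, Set.mem_iInter]
    constructor
    · rintro ⟨rfl, hx⟩
      exact ⟨_, ⟨Nat.sInf_mem hx, fun m hm => Nat.notMem_of_lt_sInf hm⟩,
        (smul_mem_iff_eq_orbitSelector hx).mpr rfl⟩
    · rintro ⟨n, ⟨hn, hmin⟩, hγ⟩
      have hinf : sInf (isolatingIndices Γ V x) = n :=
        (Nat.sInf_le hn).antisymm (not_lt.mp fun h => hmin _ h (Nat.sInf_mem ⟨n, hn⟩))
      exact ⟨((smul_mem_iff_eq_orbitSelector ⟨n, hn⟩).mp (hinf ▸ hγ)).symm, n, hn⟩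
  have hmem := baireMeasurableSet_setOf_mem_isolatingIndices (Γ := Γ) hV
  rw [this]
  exact .iUnion fun n =>
    ((hmem n).inter (.biInter (Set.to_countable _) fun m _ => (hmem m).compl)).inter
      ((hV n).preimage (continuous_const_smul γ)).baireMeasurableSet

theorem hasBMColoring_of_isolatingIndices_nonempty (hV : ∀ n, IsOpen (V n))
    (hA : ∀ᶠ x in residual X, (isolatingIndices Γ V x).Nonempty) {Ω : Set (Γ → ℕ)}
    (hΩ : ∀ γ : Γ, ∀ ω ∈ Ω, shift γ ω ∈ Ω) {ω : Γ → ℕ} (hω : ω ∈ Ω) : HasBMColoring X Ω := by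
  refine ⟨(fun γ => ω γ⁻¹) ∘ orbitSelector Γ V, baireMFun_comp_of_countable (fun γ =>
    (baireMeasurableSet_orbitSelector_fiber hV γ).of_inter_mem_residual hA) _,
    mem_of_superset hA fun x hx => ?_⟩
  have hcode : codingMap ((fun γ => ω γ⁻¹) ∘ orbitSelector Γ V) x =
      shift (orbitSelector Γ V x)⁻¹ ω := by
    funext γ
    simp [codingMap, shift, orbitSelector_smul hx]
  rw [Set.mem_ofPred_eq, hcode]
  exact hΩ _ ω hω

end Selector

theorem eventually_residual_isolatingIndices_nonempty {Γ X : Type*} [Group Γ] [Countable Γ]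
    [TopologicalSpace X] [PolishSpace X] [MulAction Γ X] [ContinuousConstSMul Γ X]
    (hfree : ∀ (γ : Γ) (x : X), γ • x = x → γ = 1) {V : ℕ → Set X}
    (hV : IsTopologicalBasis (Set.range V)) (hsmooth : GenSmooth Γ X) :
    ∀ᶠ x in residual X, (isolatingIndices Γ V x).Nonempty := by
  obtain ⟨g, hg, hsep⟩ := hsmooth
  obtain ⟨M, hM, hgM⟩ := hg.exists_isMeagre_continuousOn
  obtain ⟨C, hCM, hCG, hCres, hCinv⟩ := exists_smul_invariant_isGδ_subset (Γ := Γ) hM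
  refine mem_of_superset hCres fun x hx => ?_
  have horb : orbit Γ x ⊆ C := by
    rintro _ ⟨γ, rfl⟩
    exact hCinv γ x hx
  have hG : IsGδ (orbit Γ x) := isGδ_orbit hCG (hgM.mono hCM) hsep horb
  obtain ⟨y, -, W, hW, hWy⟩ :=
    hG.exists_isOpen_inter_eq_singleton (Set.countable_range _) (nonempty_orbit x)
  exact exists_existsUnique_smul_mem hfree hV hW hWy

theorem stmt0_general {Γ : Type*} [Group Γ] [Countable Γ]
    (X : Type*) [TopologicalSpace X] [PolishSpace X] [Nonempty X] [MulAction Γ X]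
    (hcont : ∀ γ : Γ, Continuous fun x : X => γ • x)
    (hfree : ∀ (γ : Γ) (x : X), γ • x = x → γ = 1)
    (hsmooth : GenSmooth Γ X)
    (Ω : Set (Γ → ℕ)) (hΩ : IsSubshift Ω) :
    HasBMColoring X Ω ↔ Ω.Nonempty := by
  constructor
  · rintro ⟨f, -, hres⟩
    obtain ⟨x, hx⟩ := (dense_of_mem_residual hres).nonempty
    exact ⟨codingMap f x, hx⟩
  · rintro ⟨ω, hω⟩
    have : ContinuousConstSMul Γ X := ⟨hcont⟩
    obtain ⟨V, hV⟩ := exists_seq_basis X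
    exact hasBMColoring_of_isolatingIndices_nonempty (fun n => hV.isOpen ⟨n, rfl⟩)
      (eventually_residual_isolatingIndices_nonempty hfree hV hsmooth) hΩ.2 hω

/-- If a free continuous action of a countably infinite group `Γ` on a nonempty Polish
space is generically smooth, then it admits a Baire measurable `Ω`-coloring for a
subshift `Ω` if and only if `Ω` is nonempty. -/
theorem stmt0 {Γ : Type*} [Group Γ] [Countable Γ] [Infinite Γ]
    (X : Type*) [TopologicalSpace X] [PolishSpace X] [Nonempty X] [MulAction Γ X]
    (hcont : ∀ γ : Γ, Continuous fun x : X => γ • x)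
    (hfree : ∀ (γ : Γ) (x : X), γ • x = x → γ = 1)
    (hsmooth : GenSmooth Γ X)
    (Ω : Set (Γ → ℕ)) (hΩ : IsSubshift Ω) :
    HasBMColoring X Ω ↔ Ω.Nonempty :=
  stmt0_general X hcont hfree hsmooth Ω hΩ

end DescColor
end

section
/- Let Γ be a countably infinite group and let α be a continuous action of Γ on a Polish space X. Let 𝒫 denote the Polish space of all subsets of the (countable) set of finite partial colorings of Γ, with the product (Cantor) topology, and code each subshift Ω by Fin(Ω) ∈ 𝒫. Then the set {Fin(Ω) : Ω is a subshift and α admits a Baire measurable Ω-coloring} is an analytic subset of 𝒫. -/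
open Set Function Topology

namespace DescColor

variable {Γ : Type*}

/-!
Write `P = Fin(Ω)`. A subshift is recovered from its finite patterns as `Ω = Col(P)`, so `P` codes
a subshift iff it is shift invariant and every `φ ∈ P` has an extension in `Col(P)`; choosing such
extensions, this becomes a Borel condition on `P` together with the chosen witnesses.

A Baire measurable coloring agrees on a comeager set with one that is constant on the pieces `W c`
of an open partition of a dense open set. By the Baire category theorem such a coloring lands
generically in `Col(P)` iff no point sees, along its orbit, a `W`-pattern outside `P`: the set of
points seeing a given pattern is open, so it is empty as soon as it is meagre. Coding each `W c`
by the basic open sets it contains, this is again a Borel condition on `P` and the code. Both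
sets in question are therefore projections of Borel sets, hence analytic.
-/

open MeasureTheory TopologicalSpace

instance [Countable Γ] : Countable (FPC Γ) :=
  Function.Injective.countable (f := fun φ : FPC Γ =>
    Finsupp.onFinset φ.2.toFinset (fun γ => Encodable.encode (φ.1 γ)) fun γ hγ => by
      simpa using fun h : φ.1 γ = none => hγ (by rw [h]; rfl))
    fun φ ψ h => Subtype.ext <| funext fun γ =>
      Encodable.encode_injective (by simpa using DFunLike.congr_fun h γ)

instance (φ : FPC Γ) : Finite (domP φ) := φ.2.to_subtype

def Extends (ω : Γ → ℕ) (φ : FPC Γ) : Prop :=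
  ∀ γ c, φ.1 γ = some c → ω γ = c

section Extends

variable [DecidableEq Γ] {ω : Γ → ℕ} {φ : FPC Γ}

lemma extends_restrictTo (ω : Γ → ℕ) (S : Finset Γ) : Extends ω (restrictTo ω S) := by
  intro γ c h
  by_cases hγ : γ ∈ S <;> simp_all [restrictTo]

lemma restrictTo_eq_of_extends (h : Extends ω φ) : restrictTo ω φ.2.toFinset = φ := by
  refine Subtype.ext (funext fun γ => ?_)
  cases hγ : φ.1 γ with
  | none => simp [restrictTo, hγ]
  | some c => simp [restrictTo, hγ, h γ c hγ]

lemma mem_colOf_iff {P : Set (FPC Γ)} : ω ∈ ColOf P ↔ ∀ φ, Extends ω φ → φ ∈ P :=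
  ⟨fun hω _ hφ => restrictTo_eq_of_extends hφ ▸ hω _,
    fun hω S => hω _ (extends_restrictTo ω S)⟩

end Extends

lemma isOpen_setOf_forall_some {α : Type*} [TopologicalSpace α] (φ : FPC Γ)
    {p : Γ → ℕ → α → Prop} (hp : ∀ γ c, IsOpen {a | p γ c a}) :
    IsOpen {a | ∀ γ c, φ.1 γ = some c → p γ c a} := by
  have h : {a | ∀ γ c, φ.1 γ = some c → p γ c a}
      = ⋂ γ ∈ domP φ, {a | ∀ c, φ.1 γ = some c → p γ c a} := by
    ext a
    simp only [mem_ofPred_eq, mem_iInter, domP]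
    exact ⟨fun h γ _ => h γ, fun h γ c hc => h γ (by simp [hc]) c hc⟩
  rw [h]
  refine φ.2.isOpen_biInter fun γ _ => ?_
  cases φ.1 γ with
  | none => simp
  | some c => simpa using hp γ c

lemma isOpen_setOf_extends (φ : FPC Γ) : IsOpen {ω : Γ → ℕ | Extends ω φ} :=
  isOpen_setOf_forall_some φ fun γ c =>
    (isOpen_discrete {c}).preimage (continuous_apply (A := fun _ => ℕ) γ)

lemma isClosed_colOf [DecidableEq Γ] (P : Set (FPC Γ)) : IsClosed (ColOf P) := by
  have h : ColOf P = ⋂ φ ∈ Pᶜ, {ω | Extends ω φ}ᶜ := by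
    ext ω
    simp only [mem_colOf_iff, mem_iInter, mem_compl_iff, mem_ofPred_eq]
    exact ⟨fun h φ hφ hω => hφ (h φ hω), fun h φ hω => by_contra fun hφ => h φ hφ hω⟩
  rw [h]
  exact isClosed_biInter fun φ _ => (isOpen_setOf_extends φ).isClosed_compl

lemma finOf_colOf_subset [DecidableEq Γ] (P : Set (FPC Γ)) : FinOf (ColOf P) ⊆ P :=
  fun _ ⟨_, hω, hφ⟩ => mem_colOf_iff.mp hω _ hφ

lemma mem_closure_of_forall_extends_mem_finOf [DecidableEq Γ] {Ω : Set (Γ → ℕ)} {ω : Γ → ℕ}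
    (h : ∀ φ, Extends ω φ → φ ∈ FinOf Ω) : ω ∈ closure Ω := by
  rw [mem_closure_iff_nhds, nhds_pi]
  rintro s hs
  obtain ⟨I, hI, t, ht, hIt⟩ := Filter.mem_pi.mp hs
  obtain ⟨ω', hω', hext⟩ := h _ (extends_restrictTo ω hI.toFinset)
  refine ⟨ω', hIt fun γ hγ => ?_, hω'⟩
  rw [hext γ (ω γ) (by simp [restrictTo, hγ])]
  exact mem_of_mem_nhds (ht γ)

section Shift

variable [Group Γ]

lemma shiftP_shiftP_inv (γ : Γ) (φ : FPC Γ) : shiftP γ (shiftP γ⁻¹ φ) = φ :=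
  Subtype.ext <| funext fun δ => congrArg φ.1 (mul_inv_cancel_right δ γ)

lemma Extends.shiftP_inv {ω : Γ → ℕ} {φ : FPC Γ} {γ : Γ} (h : Extends (shift γ ω) φ) :
    Extends ω (shiftP γ⁻¹ φ) := fun δ c hc => by
  simpa [shift] using h (δ * γ⁻¹) c hc

lemma shift_mem_colOf [DecidableEq Γ] {P : Set (FPC Γ)} (hP : ∀ (γ : Γ), ∀ φ ∈ P, shiftP γ φ ∈ P)
    (γ : Γ) {ω : Γ → ℕ} (hω : ω ∈ ColOf P) : shift γ ω ∈ ColOf P :=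
  mem_colOf_iff.mpr fun φ hφ =>
    shiftP_shiftP_inv γ φ ▸ hP γ _ (mem_colOf_iff.mp hω _ hφ.shiftP_inv)

lemma shiftP_mem_finOf {Ω : Set (Γ → ℕ)} (hΩ : ∀ (γ : Γ), ∀ ω ∈ Ω, shift γ ω ∈ Ω) (γ : Γ)
    {φ : FPC Γ} (hφ : φ ∈ FinOf Ω) : shiftP γ φ ∈ FinOf Ω := by
  obtain ⟨ω, hω, hext⟩ := hφ
  exact ⟨shift γ ω, hΩ γ ω hω, fun δ c hc => hext (δ * γ) c hc⟩

end Shift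

section SubshiftCodes

variable [Group Γ] [DecidableEq Γ] {g : FPC Γ → Bool}

lemma CodesSubshift.eq_colOf {Ω : Set (Γ → ℕ)} (h : CodesSubshift g Ω) :
    Ω = ColOf {φ | g φ = true} := by
  ext ω
  rw [mem_colOf_iff]
  refine ⟨fun hω φ hφ => (h.2 φ).mpr ⟨ω, hω, hφ⟩, fun hω => ?_⟩
  rw [← h.1.1.closure_eq]
  exact mem_closure_of_forall_extends_mem_finOf fun φ hφ => (h.2 φ).mp (hω φ hφ)

lemma codesSubshift_colOf_iff :
    CodesSubshift g (ColOf {φ | g φ = true}) ↔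
      (∀ (γ : Γ) φ, g φ = true → g (shiftP γ φ) = true) ∧
        ∀ φ, g φ = true → ∃ ω ∈ ColOf {φ | g φ = true}, Extends ω φ := by
  constructor
  · rintro ⟨⟨-, hshift⟩, hfin⟩
    exact ⟨fun γ φ hφ => (hfin _).mpr (shiftP_mem_finOf hshift γ ((hfin φ).mp hφ)),
      fun φ hφ => (hfin φ).mp hφ⟩
  · rintro ⟨hshift, hfin⟩
    exact ⟨⟨isClosed_colOf _, fun γ _ => shift_mem_colOf hshift γ⟩,
      fun φ => ⟨hfin φ, fun hφ => finOf_colOf_subset _ hφ⟩⟩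

end SubshiftCodes

section Baire

variable {X : Type*}

open Classical in
/-- Equal to `c` on `W c` when the `W c` are disjoint, and to `0` off `⋃ c, W c`. -/
noncomputable def partitionColoring (W : ℕ → Set X) (x : X) : ℕ :=
  if h : ∃ c, x ∈ W c then h.choose else 0

lemma partitionColoring_eq_iff {W : ℕ → Set X} (hW : Pairwise (Disjoint on W)) {x : X}
    (hx : x ∈ ⋃ c, W c) (c : ℕ) : partitionColoring W x = c ↔ x ∈ W c := by
  have hex : ∃ c, x ∈ W c := mem_iUnion.mp hx
  rw [partitionColoring, dif_pos hex]
  exact ⟨fun h => h ▸ hex.choose_spec,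
    fun hc => hW.eq (Set.not_disjoint_iff.mpr ⟨x, hex.choose_spec, hc⟩)⟩

section Patterns

variable [Group Γ] [MulAction Γ X]

/-- The points whose orbit pattern extends `φ` when `W c` is read as the color class of `c`. -/
def patternSet (W : ℕ → Set X) (φ : FPC Γ) : Set X :=
  {x | ∀ (γ : Γ) c, φ.1 γ = some c → γ • x ∈ W c}

lemma extends_codingMap_iff {f : X → ℕ} {W : ℕ → Set X} {x : X}
    (hx : ∀ (γ : Γ) c, f (γ • x) = c ↔ γ • x ∈ W c) (φ : FPC Γ) :
    Extends (codingMap f x) φ ↔ x ∈ patternSet W φ := by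
  simp only [Extends, codingMap, patternSet, mem_ofPred_eq, hx]

end Patterns

variable [TopologicalSpace X]

lemma exists_open_partition_of_baireMFun [BaireSpace X] {f : X → ℕ} (hf : BaireMFun f) :
    ∃ W : ℕ → Set X, (∀ c, IsOpen (W c)) ∧ Pairwise (Disjoint on W) ∧
      ∀ᶠ x in residual X, ∀ c, f x = c ↔ x ∈ W c := by
  choose W hWo hWm using fun c : ℕ => hf {c} (measurableSet_singleton c)
  have hfW : ∀ᶠ x in residual X, ∀ c, f x = c ↔ x ∈ W c := by
    refine Filter.mem_of_superset (isMeagre_iUnion hWm) fun x hx c => ?_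
    have hxc := mt (mem_iUnion_of_mem c) hx
    simp only [Set.mem_symmDiff, mem_preimage, mem_singleton_iff] at hxc
    tauto
  refine ⟨W, hWo, fun c c' hcc' => Set.disjoint_iff_inter_eq_empty.mpr ?_, hfW⟩
  by_contra hne
  refine not_isMeagre_of_isOpen ((hWo c).inter (hWo c')) (nonempty_iff_ne_empty.mpr hne) ?_
  filter_upwards [hfW] with x hx hxW
  exact hcc' (((hx c).mpr hxW.1).symm.trans ((hx c').mpr hxW.2))

lemma baireMFun_of_eventually_eq_iff_mem {f : X → ℕ} {W : ℕ → Set X} (hW : ∀ c, IsOpen (W c))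
    (hfW : ∀ᶠ x in residual X, ∀ c, f x = c ↔ x ∈ W c) : BaireMFun f := by
  intro A _
  refine ⟨⋃ c ∈ A, W c, isOpen_biUnion fun c _ => hW c, ?_⟩
  filter_upwards [hfW] with x hx
  simp [← hx]

lemma eventually_partitionColoring_eq_iff {W : ℕ → Set X} (hWo : ∀ c, IsOpen (W c))
    (hW : Pairwise (Disjoint on W)) (hd : Dense (⋃ c, W c)) :
    ∀ᶠ x in residual X, ∀ c, partitionColoring W x = c ↔ x ∈ W c :=
  Filter.mem_of_superset (residual_of_dense_open (isOpen_iUnion hWo) hd) fun _ hx =>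
    partitionColoring_eq_iff hW hx

variable [Group Γ] [MulAction Γ X]

lemma eventually_residual_forall_smul [Countable Γ] [ContinuousConstSMul Γ X] {p : X → Prop}
    (h : ∀ᶠ x in residual X, p x) : ∀ᶠ x in residual X, ∀ γ : Γ, p (γ • x) :=
  eventually_countable_forall.mpr fun γ =>
    (tendsto_residual_of_isOpenMap (continuous_const_smul γ) (isOpenMap_smul γ)).eventually h

lemma isOpen_patternSet [ContinuousConstSMul Γ X] {W : ℕ → Set X} (hW : ∀ c, IsOpen (W c))
    (φ : FPC Γ) : IsOpen (patternSet W φ) :=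
  isOpen_setOf_forall_some φ fun γ c => (hW c).preimage (continuous_const_smul γ)

lemma eventually_codingMap_mem_colOf_iff [Countable Γ] [DecidableEq Γ] [ContinuousConstSMul Γ X]
    [BaireSpace X] {f : X → ℕ} {W : ℕ → Set X} (hW : ∀ c, IsOpen (W c))
    (hfW : ∀ᶠ x in residual X, ∀ c, f x = c ↔ x ∈ W c) (P : Set (FPC Γ)) :
    (∀ᶠ x in residual X, codingMap f x ∈ ColOf P) ↔ ∀ φ ∉ P, patternSet W φ = ∅ := by
  have hiff : ∀ᶠ x in residual X,
      (codingMap f x ∈ ColOf P ↔ ∀ φ, x ∈ patternSet W φ → φ ∈ P) := by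
    filter_upwards [eventually_residual_forall_smul (Γ := Γ) hfW] with x hx
    simp only [mem_colOf_iff, extends_codingMap_iff hx]
  constructor
  · intro h φ hφ
    by_contra hne
    refine not_isMeagre_of_isOpen (isOpen_patternSet hW φ) (nonempty_iff_ne_empty.mpr hne) ?_
    filter_upwards [h, hiff] with x hx hxP hxφ
    exact hφ (hxP.mp hx φ hxφ)
  · intro h
    filter_upwards [hiff] with x hx
    exact hx.mpr fun φ hxφ => by_contra fun hφ => (h φ hφ).subset hxφ

lemma hasBMColoring_colOf_iff [Countable Γ] [DecidableEq Γ] [ContinuousConstSMul Γ X]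
    [BaireSpace X] (P : Set (FPC Γ)) :
    HasBMColoring X (ColOf P) ↔ ∃ W : ℕ → Set X, (∀ c, IsOpen (W c)) ∧
      Pairwise (Disjoint on W) ∧ Dense (⋃ c, W c) ∧ ∀ φ ∉ P, patternSet W φ = ∅ := by
  constructor
  · rintro ⟨f, hf, hfP⟩
    obtain ⟨W, hWo, hWd, hfW⟩ := exists_open_partition_of_baireMFun hf
    refine ⟨W, hWo, hWd, ?_, (eventually_codingMap_mem_colOf_iff hWo hfW P).mp hfP⟩
    exact (dense_of_mem_residual hfW).mono fun x hx => mem_iUnion.mpr ⟨f x, (hx (f x)).mp rfl⟩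
  · rintro ⟨W, hWo, hWd, hdense, hP⟩
    have hfW := eventually_partitionColoring_eq_iff hWo hWd hdense
    exact ⟨partitionColoring W, baireMFun_of_eventually_eq_iff_mem hWo hfW,
      (eventually_codingMap_mem_colOf_iff hWo hfW P).mpr hP⟩

end Baire

section OpenCodes

variable {X : Type*} {B : ℕ → Set X}

/-- Open sets coded as unions of basic sets, so that codes range over the Polish space
`ℕ → ℕ → Bool`. -/
def codedOpen (B : ℕ → Set X) (h : ℕ → ℕ → Bool) (c : ℕ) : Set X :=
  ⋃ m, ⋃ (_ : h c m = true), B m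

lemma pairwise_disjoint_codedOpen_iff {h : ℕ → ℕ → Bool} :
    Pairwise (Disjoint on codedOpen B h) ↔
      ∀ c c', c ≠ c' → ∀ m m', h c m = true → h c' m' = true → Disjoint (B m) (B m') := by
  simp only [Pairwise, Function.onFun, codedOpen, disjoint_iUnion_left, disjoint_iUnion_right]
  exact ⟨fun H c c' hc m m' hm hm' => H hc m' hm' m hm,
    fun H c c' hc m' hm' m hm => H c c' hc m m' hm hm'⟩

lemma patternSet_codedOpen_nonempty_iff [Group Γ] [MulAction Γ X] {h : ℕ → ℕ → Bool}
    (φ : FPC Γ) : (patternSet (codedOpen B h) φ).Nonempty ↔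
      ∃ m : domP φ → ℕ, (∀ γ : domP φ, ∃ c, φ.1 γ = some c ∧ h c (m γ) = true) ∧
        (⋂ γ : domP φ, (γ.1 • ·) ⁻¹' B (m γ)).Nonempty := by
  constructor
  · rintro ⟨x, hx⟩
    have hm : ∀ γ : domP φ, ∃ m c, φ.1 γ = some c ∧ h c m = true ∧ γ.1 • x ∈ B m := by
      rintro ⟨γ, hγ⟩
      obtain ⟨c, hc⟩ := Option.ne_none_iff_exists'.mp hγ
      obtain ⟨m, hm, hxm⟩ := mem_iUnion₂.mp (hx γ c hc)
      exact ⟨m, c, hc, hm, hxm⟩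
    choose m c hc hm hxm using hm
    exact ⟨m, fun γ => ⟨c γ, hc γ, hm γ⟩, x, mem_iInter.mpr hxm⟩
  · rintro ⟨m, hm, x, hx⟩
    refine ⟨x, fun γ c hc => ?_⟩
    have hγ : γ ∈ domP φ := by simp [domP, hc]
    obtain ⟨c', hc', hm'⟩ := hm ⟨γ, hγ⟩
    obtain rfl : c' = c := Option.some_inj.mp (hc'.symm.trans hc)
    exact mem_iUnion₂.mpr ⟨_, hm', mem_iInter.mp hx ⟨γ, hγ⟩⟩

variable [TopologicalSpace X]

lemma exists_codedOpen_eq (hB : IsTopologicalBasis (range B)) {W : ℕ → Set X}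
    (hW : ∀ c, IsOpen (W c)) : ∃ h, codedOpen B h = W := by
  classical
  refine ⟨fun c m => decide (B m ⊆ W c), funext fun c => subset_antisymm ?_ fun x hx => ?_⟩
  · exact iUnion₂_subset fun m hm => of_decide_eq_true hm
  · obtain ⟨_, ⟨m, rfl⟩, hxm, hmW⟩ := hB.exists_subset_of_mem_open hx (hW c)
    exact mem_iUnion₂.mpr ⟨m, decide_eq_true hmW, hxm⟩

lemma dense_iUnion_codedOpen_iff (hB : IsTopologicalBasis (range B)) {h : ℕ → ℕ → Bool} :
    Dense (⋃ c, codedOpen B h c) ↔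
      ∀ k, (B k).Nonempty → ∃ c m, h c m = true ∧ (B k ∩ B m).Nonempty := by
  simp [hB.dense_iff, codedOpen, inter_iUnion]

variable [Group Γ] [Countable Γ] [MulAction Γ X]

lemma hasBMColoring_colOf_iff_exists_code [DecidableEq Γ] [ContinuousConstSMul Γ X]
    [BaireSpace X] (hB : IsTopologicalBasis (range B)) (P : Set (FPC Γ)) :
    HasBMColoring X (ColOf P) ↔ ∃ h : ℕ → ℕ → Bool, Pairwise (Disjoint on codedOpen B h) ∧
      Dense (⋃ c, codedOpen B h c) ∧ ∀ φ ∉ P, patternSet (codedOpen B h) φ = ∅ := by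
  rw [hasBMColoring_colOf_iff]
  constructor
  · rintro ⟨W, hWo, hW⟩
    obtain ⟨h, rfl⟩ := exists_codedOpen_eq hB hWo
    exact ⟨h, hW⟩
  · rintro ⟨h, hh⟩
    exact ⟨codedOpen B h, fun c => isOpen_biUnion fun m _ => hB.isOpen ⟨m, rfl⟩, hh⟩

lemma measurableSet_coloringCodes (hB : IsTopologicalBasis (range B)) :
    MeasurableSet {q : (FPC Γ → Bool) × (ℕ → ℕ → Bool) |
      Pairwise (Disjoint on codedOpen B q.2) ∧ Dense (⋃ c, codedOpen B q.2 c) ∧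
        ∀ φ ∉ {φ | q.1 φ = true}, patternSet (codedOpen B q.2) φ = ∅} := by
  simp only [pairwise_disjoint_codedOpen_iff, dense_iUnion_codedOpen_iff hB, mem_ofPred_eq,
    ← not_nonempty_iff_eq_empty, patternSet_codedOpen_nonempty_iff, measurableSet_setOfPred]
  fun_prop

end OpenCodes

lemma _root_.MeasureTheory.AnalyticSet.inter {α : Type*} [TopologicalSpace α] [T2Space α]
    {s t : Set α} (hs : AnalyticSet s) (ht : AnalyticSet t) : AnalyticSet (s ∩ t) := by
  rw [inter_eq_iInter]
  exact AnalyticSet.iInter fun b => by cases b <;> assumption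

lemma analyticSet_setOf_exists {α β : Type*} [TopologicalSpace α] [PolishSpace α]
    [MeasurableSpace α] [BorelSpace α] [TopologicalSpace β] [PolishSpace β] [MeasurableSpace β]
    [BorelSpace β] {p : α → β → Prop} (hp : MeasurableSet {q : α × β | p q.1 q.2}) :
    AnalyticSet {a | ∃ b, p a b} := by
  have h : {a | ∃ b, p a b} = Prod.fst '' {q : α × β | p q.1 q.2} := by ext; simp
  rw [h]
  exact hp.analyticSet.image_of_continuous continuous_fst

section Analytic

variable [Group Γ] [Countable Γ] [DecidableEq Γ]

lemma analyticSet_setOf_codesSubshift_colOf :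
    AnalyticSet {g : FPC Γ → Bool | CodesSubshift g (ColOf {φ | g φ = true})} := by
  have h : {g : FPC Γ → Bool | CodesSubshift g (ColOf {φ | g φ = true})}
      = {g | ∃ w : FPC Γ → Γ → ℕ, (∀ (γ : Γ) φ, g φ = true → g (shiftP γ φ) = true) ∧
          ∀ φ, g φ = true → (∀ ψ, Extends (w φ) ψ → g ψ = true) ∧ Extends (w φ) φ} := by
    ext g
    simp only [mem_ofPred_eq, codesSubshift_colOf_iff, mem_colOf_iff]
    constructor
    · rintro ⟨hshift, hext⟩
      choose! w hw using hext
      exact ⟨w, hshift, hw⟩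
    · rintro ⟨w, hshift, hw⟩
      exact ⟨hshift, fun φ hφ => ⟨w φ, hw φ hφ⟩⟩
  have : PolishSpace (FPC Γ → Bool) := {}
  rw [h]
  apply analyticSet_setOf_exists
  simp only [Extends, measurableSet_setOfPred]
  fun_prop

lemma analyticSet_setOf_hasBMColoring_colOf {X : Type*} [TopologicalSpace X] [BaireSpace X]
    [MulAction Γ X] [ContinuousConstSMul Γ X] {B : ℕ → Set X}
    (hB : IsTopologicalBasis (range B)) :
    AnalyticSet {g : FPC Γ → Bool | HasBMColoring X (ColOf {φ | g φ = true})} := by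
  have : PolishSpace (FPC Γ → Bool) := {}
  have : PolishSpace (ℕ → ℕ → Bool) := {}
  simp only [hasBMColoring_colOf_iff_exists_code hB]
  exact analyticSet_setOf_exists (measurableSet_coloringCodes hB)

end Analytic

theorem stmt2_general {Γ : Type*} [Group Γ] [Countable Γ]
    (X : Type*) [TopologicalSpace X] [PolishSpace X] [MulAction Γ X]
    (hcont : ∀ γ : Γ, Continuous fun x : X => γ • x) :
    MeasureTheory.AnalyticSet
      {g : FPC Γ → Bool | ∃ Ω : Set (Γ → ℕ), CodesSubshift g Ω ∧ HasBMColoring X Ω} := by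
  classical
  have : ContinuousConstSMul Γ X := ⟨hcont⟩
  obtain ⟨B, hB⟩ := exists_seq_basis X
  have h : {g : FPC Γ → Bool | ∃ Ω : Set (Γ → ℕ), CodesSubshift g Ω ∧ HasBMColoring X Ω}
      = {g | CodesSubshift g (ColOf {φ | g φ = true})} ∩
          {g | HasBMColoring X (ColOf {φ | g φ = true})} := by
    ext g
    refine ⟨fun ⟨Ω, hΩ, hcol⟩ => ?_, fun h => ⟨_, h⟩⟩
    obtain rfl := hΩ.eq_colOf
    exact ⟨hΩ, hcol⟩
  rw [h]
  exact analyticSet_setOf_codesSubshift_colOf.inter (analyticSet_setOf_hasBMColoring_colOf hB)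

/-- For a continuous action of `Γ` on a Polish space, the set of (codes of) subshifts
admitting a Baire measurable coloring is analytic. -/
theorem stmt2 {Γ : Type*} [Group Γ] [Countable Γ] [Infinite Γ]
    (X : Type*) [TopologicalSpace X] [PolishSpace X] [MulAction Γ X]
    (hcont : ∀ γ : Γ, Continuous fun x : X => γ • x) :
    MeasureTheory.AnalyticSet
      {g : FPC Γ → Bool | ∃ Ω : Set (Γ → ℕ), CodesSubshift g Ω ∧ HasBMColoring X Ω} :=
  stmt2_general X hcont

end DescColor
end

section
/- Let X be a Polish space and Y a standard Borel space. Then the σ-algebra Σ(X,Y) separates points: for any two Baire measurable functions f, g : X → Y that are not *-equal, there is a set S ∈ Σ(X,Y) with [f] ∈ S and [g] ∉ S. -/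
open Set Function Topology

namespace DescColor

variable {Γ : Type*}

/-!
As `Y` is countably separated, `f ≠* g` yields a Borel set `A` with `f⁻¹(A) ∖ g⁻¹(A)`
nonmeager. This set is Baire measurable, so it is comeager in some nonempty open `U`;
then `[U, A]` contains `[f]`, while `[g] ∈ [U, A]` would make `U` meager.
-/

section BaireFunctions

variable {X Y : Type*} [TopologicalSpace X]

lemma BaireMSet.baireMeasurableSet {S : Set X} (h : BaireMSet S) : BaireMeasurableSet S := by
  obtain ⟨U, hU, hSU⟩ := h
  refine hU.baireMeasurableSet.congr (Filter.eventuallyEq_set.mpr ?_)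
  filter_upwards [hSU] with x hx
  simp only [mem_compl_iff, mem_symmDiff] at hx
  tauto

lemma BaireMeasurableSet.exists_isOpen_nonempty_isMeagre_diff {B : Set X}
    (hB : BaireMeasurableSet B) (hBm : ¬ IsMeagre B) :
    ∃ U : Set X, IsOpen U ∧ U.Nonempty ∧ IsMeagre (U \ B) := by
  obtain ⟨U, hU, hBU⟩ := hB.residualEq_isOpen
  have hBU' := Filter.eventuallyEq_set.mp hBU
  refine ⟨U, hU, nonempty_iff_ne_empty.mpr ?_, ?_⟩
  · rintro rfl
    apply hBm
    filter_upwards [hBU'] with x hx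
    simpa using hx
  · filter_upwards [hBU'] with x hx
    simp [hx]

variable [MeasurableSpace Y]

lemma BaireMFun.baireMeasurableSet_preimage {f : X → Y} (hf : BaireMFun f) {A : Set Y}
    (hA : MeasurableSet A) : BaireMeasurableSet (f ⁻¹' A) :=
  (hf A hA).baireMeasurableSet

lemma bFunRel_equivalence : Equivalence (BFunRel (X := X) (Y := Y)) :=
  ⟨fun _ => Filter.EventuallyEq.refl _ _, Filter.EventuallyEq.symm, Filter.EventuallyEq.trans⟩

lemma mk_mem_forceSet_iff {U : Set X} {A : Set Y} {f : BMFunSub X Y} :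
    Quot.mk BFunRel f ∈ forceSet U A ↔ IsMeagre (U \ f.1 ⁻¹' A) := by
  refine ⟨?_, fun h => ⟨f, rfl, h⟩⟩
  rintro ⟨f', hf', hU⟩
  have hff' : ∀ᶠ x in residual X, f'.1 x = f.1 x :=
    bFunRel_equivalence.eqvGen_iff.mp (Quot.eqvGen_exact hf')
  rw [IsMeagre] at hU ⊢
  filter_upwards [hU, hff'] with x hxU hx
  simpa [hx] using hxU

lemma measurableSet_forceSet {U : Set X} {A : Set Y} (hU : IsOpen U) (hUne : U.Nonempty)
    (hA : MeasurableSet A) : @MeasurableSet (BFun X Y) (SigmaXY X Y) (forceSet U A) :=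
  MeasurableSpace.measurableSet_generateFrom ⟨U, A, hU, hUne, hA, rfl⟩

lemma exists_measurableSet_not_isMeagre_preimage_diff [MeasurableSpace.CountablySeparated Y]
    {f g : X → Y} (h : ¬ f =ᶠ[residual X] g) :
    ∃ A : Set Y, MeasurableSet A ∧ ¬ IsMeagre (f ⁻¹' A \ g ⁻¹' A) := by
  obtain ⟨𝒮, h𝒮c, h𝒮m, h𝒮sep⟩ := exists_countable_separating Y MeasurableSet univ
  by_contra! hA
  have hcover : {x | f x = g x}ᶜ ⊆ ⋃ s ∈ 𝒮, (f ⁻¹' s \ g ⁻¹' s) ∪ (f ⁻¹' sᶜ \ g ⁻¹' sᶜ) := by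
    intro x hx
    by_contra hx'
    simp only [mem_iUnion, not_exists, mem_union, mem_sdiff, mem_preimage, mem_compl_iff] at hx'
    exact hx <| h𝒮sep _ trivial _ trivial fun s hs => by have := hx' s hs; tauto
  refine h ?_
  have hm := (isMeagre_biUnion h𝒮c fun s hs =>
    (hA s (h𝒮m s hs)).union (hA sᶜ (h𝒮m s hs).compl)).mono hcover
  rwa [IsMeagre, compl_compl] at hm

end BaireFunctions

/-- The σ-algebra `Σ(X,Y)` separates points of `B(X,Y)`. -/
theorem stmt4 (X Y : Type*) [TopologicalSpace X] [PolishSpace X]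
    [MeasurableSpace Y] [StandardBorelSpace Y]
    (f g : X → Y) (hf : BaireMFun f) (hg : BaireMFun g)
    (hne : {x : X | f x = g x} ∉ residual X) :
    ∃ S : Set (BFun X Y), @MeasurableSet (BFun X Y) (SigmaXY X Y) S ∧
      Quot.mk BFunRel ⟨f, hf⟩ ∈ S ∧ Quot.mk BFunRel ⟨g, hg⟩ ∉ S := by
  obtain ⟨A, hA, hfg⟩ := exists_measurableSet_not_isMeagre_preimage_diff hne
  obtain ⟨U, hU, hUne, hUfg⟩ := BaireMeasurableSet.exists_isOpen_nonempty_isMeagre_diff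
    ((hf.baireMeasurableSet_preimage hA).diff (hg.baireMeasurableSet_preimage hA)) hfg
  refine ⟨forceSet U A, measurableSet_forceSet hU hUne hA, ?_, ?_⟩
  · exact mk_mem_forceSet_iff.mpr (hUfg.mono (sdiff_subset_sdiff_right sdiff_subset))
  · rw [mk_mem_forceSet_iff]
    intro hUg
    have hsub : U ∩ g ⁻¹' A ⊆ U \ (f ⁻¹' A \ g ⁻¹' A) := fun x hx => ⟨hx.1, fun h => h.2 hx.2⟩
    have hUg' : IsMeagre (U ∩ g ⁻¹' A) := hUfg.mono hsub
    exact not_isMeagre_of_isOpen hU hUne (by simpa only [sdiff_union_inter] using hUg.union hUg')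

end DescColor
end

section
/- Let (Z, 𝔖) be a measurable space such that 𝔖 separates points, and let A : ℕ → Set Z be a sequence of sets in 𝔖 that generates 𝔖 as a σ-algebra. Define θ : Z → (ℕ → Bool) by θ(z)(n) = true if z ∈ A(n) and false otherwise, and let Θ be the range of θ. Then (Z, 𝔖) is a standard Borel space if and only if Θ is a Borel subset of the Cantor space ℕ → Bool (with the product topology). -/
open Set Function Topology

namespace DescColor

variable {Γ : Type*}

theorem standardBorelSpace_of_mequiv {α β : Type*} [mα : MeasurableSpace α]
    [mβ : MeasurableSpace β] [StandardBorelSpace β] (e : α ≃ᵐ β) : StandardBorelSpace α := by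
  letI := upgradeStandardBorel β
  letI tα : TopologicalSpace α := TopologicalSpace.induced e inferInstance
  haveI hp : PolishSpace α := e.toEquiv.polishSpace_induced
  have hcomap : MeasurableSpace.comap e mβ = mα := by
    refine le_antisymm ?_ ?_
    · rw [← measurable_iff_comap_le]
      exact e.measurable
    · intro s hs
      exact ⟨e.symm ⁻¹' s, e.symm.measurable hs, by
        ext x; simp⟩
  haveI : BorelSpace α := ⟨by
    rw [borel_comap, ← BorelSpace.measurable_eq (α := β)]
    have h2 : (UpgradedStandardBorel.toMeasurableSpace : MeasurableSpace β) = mβ := rfl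
    rw [h2, hcomap]⟩
  infer_instance

/-- A point-separating measurable space with a countable generating sequence is standard
Borel iff the range of the induced map to Cantor space is Borel. -/
theorem stmt6 (Z : Type*) [mZ : MeasurableSpace Z]
    (hsep : ∀ z z' : Z, z ≠ z' → ∃ S : Set Z, MeasurableSet S ∧ z ∈ S ∧ z' ∉ S)
    (A : ℕ → Set Z) (hA : ∀ n, MeasurableSet (A n))
    (hgen : MeasurableSpace.generateFrom (Set.range A) = mZ)
    (θ : Z → ℕ → Bool) (hθ : ∀ (z : Z) (n : ℕ), θ z n = true ↔ z ∈ A n) :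
    StandardBorelSpace Z ↔ @MeasurableSet (ℕ → Bool) (borel (ℕ → Bool)) (Set.range θ) := by
  classical
  have hθinj : Function.Injective θ := by
    intro z z' h
    by_contra hne
    obtain ⟨S, hS, hz, hz'⟩ := hsep z z' hne
    have key : ∀ S : Set Z, @MeasurableSet Z (MeasurableSpace.generateFrom (Set.range A)) S →
        (z ∈ S ↔ z' ∈ S) := by
      intro S hS
      induction hS with
      | basic u hu =>
        obtain ⟨n, rfl⟩ := hu
        rw [← hθ, ← hθ, h]
      | empty => simp
      | compl u _ ih => simp [ih]
      | iUnion f _ ih =>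
        simp only [mem_iUnion]
        exact exists_congr ih
    rw [← hgen] at hS
    exact hz' ((key S hS).1 hz)
  have hθmeas : Measurable θ := by
    apply measurable_pi_iff.2
    intro n
    apply measurable_to_countable'
    intro b
    cases b with
    | true =>
      convert hA n using 1
      ext z
      simp [hθ]
    | false =>
      convert (hA n).compl using 1
      ext z
      simp only [mem_preimage, mem_singleton_iff, mem_compl_iff, ← hθ z n]
      exact ⟨fun hf ht => by simp [ht] at hf, fun hnt => by
        cases hb : θ z n with
        | true => exact absurd hb hnt
        | false => rfl⟩
  have hcomap : MeasurableSpace.comap θ (by infer_instance) = mZ := by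
    refine le_antisymm (measurable_iff_comap_le.mp hθmeas) ?_
    rw [← hgen]
    apply MeasurableSpace.generateFrom_le
    rintro _ ⟨n, rfl⟩
    refine ⟨(fun f : ℕ → Bool => f n) ⁻¹' {true},
      measurable_pi_apply n (measurableSet_singleton true), ?_⟩
    ext z
    exact hθ z n
  rw [show borel (ℕ → Bool) = (inferInstance : MeasurableSpace (ℕ → Bool)) from
    BorelSpace.measurable_eq.symm]
  have e : Z ≃ᵐ Set.range θ :=
    { toEquiv := Equiv.ofInjective θ hθinj
      measurable_toFun := hθmeas.subtype_mk
      measurable_invFun := by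
        intro s hs
        rw [← hcomap] at hs
        obtain ⟨t, ht, rfl⟩ := hs
        have key : (Equiv.ofInjective θ hθinj).symm ⁻¹' (θ ⁻¹' t) =
            Subtype.val ⁻¹' t := by
          ext y
          simp [Equiv.apply_ofInjective_symm]
        rw [key]
        exact measurable_subtype_coe ht }
  constructor
  · intro hZ
    exact (hθmeas.measurableEmbedding hθinj).measurableSet_range
  · intro hrange
    haveI : StandardBorelSpace (Set.range θ) := hrange.standardBorel
    exact standardBorelSpace_of_mequiv e

end DescColor
end

section
/- Let Γ be a countably infinite group and let Ω ⊆ ℕ^Γ be a subshift such that for every ω ∈ Ω there is some c ∈ ℕ for which the set {γ ∈ Γ : ω(γ) = c} contains exactly one element. Then every free continuous action of Γ on a Polish space that admits a Baire measurable Ω-coloring is generically smooth. -/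
open Set Function Topology

namespace DescColor

variable {Γ : Type*}

theorem baireMSet_iff_bms {X : Type*} [TopologicalSpace X] {S : Set X} :
    BaireMSet S ↔ BaireMeasurableSet S := by
  rw [BaireMeasurableSet.iff_residualEq_isOpen]
  have key : ∀ U : Set X, IsMeagre (symmDiff S U) ↔ S =ᵇ U := by
    intro U
    rw [IsMeagre]
    have hc : (symmDiff S U)ᶜ = {x | x ∈ S ↔ x ∈ U} := by
      ext x
      simp only [Set.mem_compl_iff, Set.symmDiff_def, Set.sup_eq_union, Set.mem_union,
        Set.mem_diff, Set.mem_setOf_eq]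
      tauto
    rw [hc]
    constructor
    · intro h
      exact Filter.eventuallyEq_set.mpr h
    · intro h
      exact Filter.eventuallyEq_set.mp h
  exact ⟨fun ⟨U, hU, hm⟩ => ⟨U, hU, (key U).mp hm⟩,
    fun ⟨U, hU, he⟩ => ⟨U, hU, (key U).mpr he⟩⟩

/-- If every element of a subshift `Ω` uses some color exactly once, then `Ω` is hard:
every free continuous action on a Polish space admitting a Baire measurable
`Ω`-coloring is generically smooth. -/
theorem stmt7 {Γ : Type*} [Group Γ] [Countable Γ] [Infinite Γ]
    (Ω : Set (Γ → ℕ)) (hΩ : IsSubshift Ω)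
    (hsingle : ∀ ω ∈ Ω, ∃ c : ℕ, ∃! γ : Γ, ω γ = c) :
    Hard Γ Ω := by
  classical
  intro α hcol
  letI := α.ts
  haveI := α.polish
  letI : MeasurableSpace α.X := borel α.X
  haveI : BorelSpace α.X := ⟨rfl⟩
  obtain ⟨f, hf, hC⟩ := hcol
  obtain ⟨e, he⟩ := MeasureTheory.exists_measurableEmbedding_real α.X
  -- basic notation
  set ω : α.X → Γ → ℕ := fun x γ => f (α.smul γ x) with hω
  set C : Set α.X := {x : α.X | ω x ∈ Ω} with hCdef
  -- homeomorphisms given by the action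
  let hom : Γ → α.X ≃ₜ α.X := fun g =>
    { toFun := α.smul g
      invFun := α.smul g⁻¹
      left_inv := fun x => by rw [← α.mul_smul', inv_mul_cancel, α.one_smul']
      right_inv := fun x => by rw [← α.mul_smul', mul_inv_cancel, α.one_smul']
      continuous_toFun := α.cont g
      continuous_invFun := α.cont g⁻¹ }
  have hshift : ∀ (δ : Γ) (x : α.X) (γ : Γ), ω (α.smul δ x) γ = ω x (γ * δ) := by
    intro δ x γ
    simp only [hω]
    rw [← α.mul_smul']
  have hCinv : ∀ (δ : Γ) (x : α.X), x ∈ C → α.smul δ x ∈ C := by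
    intro δ x hx
    have : ω (α.smul δ x) = shift δ (ω x) := funext fun γ => hshift δ x γ
    show ω (α.smul δ x) ∈ Ω
    rw [this]
    exact hΩ.2 δ (ω x) hx
  -- the selector
  set hasU : Set α.X := {x : α.X | ∃ c : ℕ, ∃! γ : Γ, ω x γ = c} with hUdef
  have hCsub : ∀ x, x ∈ C → x ∈ hasU := fun x hx => hsingle (ω x) hx
  let cs : α.X → ℕ := fun x => if h : x ∈ hasU then Nat.find h else 0
  let gs : α.X → Γ := fun x => if h : x ∈ hasU then (Nat.find_spec h).choose else 1
  have hgs_spec : ∀ x, ∀ h : x ∈ hasU, ω x (gs x) = cs x ∧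
      (∀ γ, ω x γ = cs x → γ = gs x) ∧ ∀ c' < cs x, ¬ ∃! γ : Γ, ω x γ = c' := by
    intro x h
    simp only [gs, cs, dif_pos h]
    obtain ⟨h1, h2⟩ := (Nat.find_spec h).choose_spec
    exact ⟨h1, h2, fun c' hc' => Nat.find_min h hc'⟩
  have hgs_char : ∀ x (g : Γ) (c : ℕ), x ∈ hasU → ω x g = c → (∀ γ, γ ≠ g → ω x γ ≠ c) →
      (∀ c' < c, ¬ ∃! γ : Γ, ω x γ = c') → gs x = g ∧ cs x = c := by
    intro x g c h hg hu hmin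
    have hcs : cs x = c := by
      simp only [cs, dif_pos h]
      have hex : ∃! γ : Γ, ω x γ = c :=
        ⟨g, hg, fun γ hγ => by_contra fun hne => hu γ hne hγ⟩
      refine le_antisymm (Nat.find_le hex) ?_
      by_contra hlt
      push_neg at hlt
      exact hmin _ hlt (Nat.find_spec h)
    obtain ⟨h1, h2, _⟩ := hgs_spec x h
    exact ⟨(h2 g (by rw [hg, hcs])).symm, hcs⟩
  have hPiff : ∀ (δ : Γ) (x : α.X) (c : ℕ),
      (∃! γ : Γ, ω x γ = c) ↔ ∃! γ : Γ, ω (α.smul δ x) γ = c := by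
    intro δ x c
    constructor
    · rintro ⟨γ₀, h0, hu⟩
      refine ⟨γ₀ * δ⁻¹, ?_, fun γ hγ => ?_⟩
      · show ω (α.smul δ x) (γ₀ * δ⁻¹) = c
        rw [hshift]
        simpa using h0
      · have hγ' : ω (α.smul δ x) γ = c := hγ
        rw [hshift] at hγ'
        have hh := hu _ hγ'
        rw [← hh]
        group
    · rintro ⟨γ₀, h0, hu⟩
      have h0' : ω (α.smul δ x) γ₀ = c := h0
      rw [hshift] at h0'
      refine ⟨γ₀ * δ, h0', fun γ hγ => ?_⟩
      have hγ0 : ω x γ = c := hγ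
      have hγ' : ω (α.smul δ x) (γ * δ⁻¹) = c := by
        rw [hshift]
        simpa using hγ0
      have hh := hu _ hγ'
      rw [← hh]
      group
  have hUinv : ∀ (δ : Γ) (x : α.X), x ∈ hasU → α.smul δ x ∈ hasU := by
    rintro δ x ⟨c, hc⟩
    exact ⟨c, (hPiff δ x c).mp hc⟩
  have hcs_inv : ∀ (δ : Γ) (x : α.X), ∀ h : x ∈ hasU, cs (α.smul δ x) = cs x := by
    intro δ x h
    have h' := hUinv δ x h
    simp only [cs, dif_pos h, dif_pos h']
    exact le_antisymm (Nat.find_le ((hPiff δ x _).mp (Nat.find_spec h)))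
      (Nat.find_le ((hPiff δ x _).mpr (Nat.find_spec h')))
  have hsel_inv : ∀ (δ : Γ) (x : α.X), x ∈ hasU →
      α.smul (gs (α.smul δ x)) (α.smul δ x) = α.smul (gs x) x := by
    intro δ x h
    have h' := hUinv δ x h
    obtain ⟨h1, h2, _⟩ := hgs_spec (α.smul δ x) h'
    have hval : ω (α.smul δ x) (gs x * δ⁻¹) = cs (α.smul δ x) := by
      rw [hshift, hcs_inv δ x h]
      have hgg : gs x * δ⁻¹ * δ = gs x := by group
      rw [hgg, (hgs_spec x h).1]
    have hg' : gs x * δ⁻¹ = gs (α.smul δ x) := h2 _ hval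
    rw [← hg', ← α.mul_smul']
    have hgg : gs x * δ⁻¹ * δ = gs x := by group
    rw [hgg]
  -- injection of orbits into ℝ
  let orb : α.X → Set α.X := fun x => {y | ∃ γ : Γ, α.smul γ x = y}
  have horb : ∀ x y, orb x = orb y ↔ ∃ γ : Γ, α.smul γ x = y := by
    intro x y
    constructor
    · intro h
      have hy : y ∈ orb y := ⟨1, α.one_smul' y⟩
      rw [← h] at hy
      exact hy
    · rintro ⟨γ, rfl⟩
      ext z
      constructor
      · rintro ⟨δ, rfl⟩
        refine ⟨δ * γ⁻¹, ?_⟩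
        rw [α.mul_smul', ← α.mul_smul' γ⁻¹ γ, inv_mul_cancel, α.one_smul']
      · rintro ⟨δ, rfl⟩
        exact ⟨δ * γ, by rw [α.mul_smul']⟩
  have hcard : Cardinal.mk (Set.range orb) ≤ Cardinal.mk ℝ :=
    Cardinal.mk_range_le.trans (Cardinal.mk_le_of_injective he.injective)
  obtain ⟨j⟩ := (Cardinal.le_def _ _).mp hcard
  -- the classifying function
  let F : α.X → ℝ := fun x => if x ∈ C then Real.arctan (e (α.smul (gs x) x))
    else 10 + Real.arctan (j ⟨orb x, Set.mem_range_self x⟩)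
  have hpi : Real.pi ≤ 4 := Real.pi_le_four
  have hFiff : ∀ x y : α.X, F x = F y ↔ ∃ γ : Γ, α.smul γ x = y := by
    intro x y
    by_cases hx : x ∈ C <;> by_cases hy : y ∈ C
    · simp only [F, if_pos hx, if_pos hy]
      constructor
      · intro h
        have h2 := he.injective (Real.arctan_injective h)
        refine ⟨(gs y)⁻¹ * gs x, ?_⟩
        rw [α.mul_smul', h2, ← α.mul_smul', inv_mul_cancel, α.one_smul']
      · rintro ⟨δ, rfl⟩
        rw [hsel_inv δ x (hCsub x hx)]
    · simp only [F, if_pos hx, if_neg hy]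
      constructor
      · intro h
        exfalso
        have b1 := Real.arctan_lt_pi_div_two (e (α.smul (gs x) x))
        have b2 := Real.neg_pi_div_two_lt_arctan (j ⟨orb y, Set.mem_range_self y⟩)
        linarith
      · rintro ⟨δ, rfl⟩
        exact absurd (hCinv δ x hx) hy
    · simp only [F, if_neg hx, if_pos hy]
      constructor
      · intro h
        exfalso
        have b1 := Real.arctan_lt_pi_div_two (e (α.smul (gs y) y))
        have b2 := Real.neg_pi_div_two_lt_arctan (j ⟨orb x, Set.mem_range_self x⟩)
        linarith
      · rintro ⟨δ, rfl⟩
        have hmem := hCinv δ⁻¹ _ hy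
        rw [← α.mul_smul', inv_mul_cancel, α.one_smul'] at hmem
        exact absurd hmem hx
    · simp only [F, if_neg hx, if_neg hy, add_right_inj]
      constructor
      · intro h
        have h1 := Real.arctan_injective h
        have h2 : orb x = orb y := congrArg Subtype.val (j.injective h1)
        exact (horb x y).mp h2
      · intro h
        have h2 : (⟨orb x, Set.mem_range_self x⟩ : Set.range orb)
            = ⟨orb y, Set.mem_range_self y⟩ := Subtype.ext ((horb x y).mpr h)
        rw [h2]
  -- Baire measurability
  have hCbm : BaireMeasurableSet C := BaireMeasurableSet.of_mem_residual hC
  have hbasic : ∀ (g : Γ) (c : ℕ), BaireMeasurableSet {x : α.X | ω x g = c} := by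
    intro g c
    have h2 : BaireMeasurableSet (f ⁻¹' {c}) :=
      baireMSet_iff_bms.mp (hf {c} (measurableSet_singleton c))
    have h3 := h2.preimage (α.cont g) (hom g).isOpenMap
    have h4 : {x : α.X | ω x g = c} = α.smul g ⁻¹' (f ⁻¹' {c}) := by
      ext x
      simp [hω]
    rw [h4]
    exact h3
  have hEU : ∀ c : ℕ, BaireMeasurableSet {x : α.X | ∃! γ : Γ, ω x γ = c} := by
    intro c
    have heq : {x : α.X | ∃! γ : Γ, ω x γ = c} =
        ⋃ g : Γ, ({x : α.X | ω x g = c} ∩ ⋂ γ : Γ, {x : α.X | ω x γ = c → γ = g}) := by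
      ext x
      simp only [Set.mem_setOf_eq, Set.mem_iUnion, Set.mem_inter_iff, Set.mem_iInter]
      exact ⟨fun ⟨g, h1, h2⟩ => ⟨g, h1, h2⟩, fun ⟨g, h1, h2⟩ => ⟨g, h1, h2⟩⟩
    rw [heq]
    refine .iUnion fun g => (hbasic g c).inter (.iInter fun γ => ?_)
    by_cases hγ : γ = g
    · have : {x : α.X | ω x γ = c → γ = g} = Set.univ := by
        ext x; simp [hγ]
      rw [this]
      exact isOpen_univ.baireMeasurableSet
    · have : {x : α.X | ω x γ = c → γ = g} = {x : α.X | ω x γ = c}ᶜ := by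
        ext x; simp [hγ]
      rw [this]
      exact (hbasic γ c).compl
  have hSg : ∀ g : Γ, BaireMeasurableSet {x : α.X | x ∈ C ∧ gs x = g} := by
    intro g
    have heq : {x : α.X | x ∈ C ∧ gs x = g} =
        ⋃ c : ℕ, (C ∩ {x : α.X | ω x g = c} ∩ (⋂ γ : Γ, {x : α.X | ω x γ = c → γ = g}) ∩
          ⋂ c' : ℕ, {x : α.X | c' < c → ¬ ∃! γ : Γ, ω x γ = c'}) := by
      ext x
      simp only [Set.mem_setOf_eq, Set.mem_iUnion, Set.mem_inter_iff, Set.mem_iInter]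
      constructor
      · rintro ⟨hxC, rfl⟩
        obtain ⟨h1, h2, h3⟩ := hgs_spec x (hCsub x hxC)
        exact ⟨cs x, ⟨⟨hxC, h1⟩, fun γ hγ => h2 γ hγ⟩, fun c' hc' => h3 c' hc'⟩
      · rintro ⟨c, ⟨⟨hxC, h1⟩, h2⟩, h3⟩
        exact ⟨hxC, (hgs_char x g c (hCsub x hxC) h1
          (fun γ hne hc => hne (h2 γ hc)) h3).1⟩
    rw [heq]
    refine .iUnion fun c =>
      ((hCbm.inter (hbasic g c)).inter (.iInter fun γ => ?_)).inter (.iInter fun c' => ?_)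
    · by_cases hγ : γ = g
      · have : {x : α.X | ω x γ = c → γ = g} = Set.univ := by
          ext x; simp [hγ]
        rw [this]
        exact isOpen_univ.baireMeasurableSet
      · have : {x : α.X | ω x γ = c → γ = g} = {x : α.X | ω x γ = c}ᶜ := by
          ext x; simp [hγ]
        rw [this]
        exact (hbasic γ c).compl
    · by_cases h : c' < c
      · have : {x : α.X | c' < c → ¬ ∃! γ : Γ, ω x γ = c'} =
            {x : α.X | ∃! γ : Γ, ω x γ = c'}ᶜ := by
          ext x; simp [h]
        rw [this]
        exact (hEU c').compl
      · have : {x : α.X | c' < c → ¬ ∃! γ : Γ, ω x γ = c'} = Set.univ := by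
          ext x; simp [h]
        rw [this]
        exact isOpen_univ.baireMeasurableSet
  have hF : BaireMFun F := by
    intro B hB
    rw [baireMSet_iff_bms]
    have hkey : BaireMeasurableSet (F ⁻¹' B ∩ C) := by
      have heq : F ⁻¹' B ∩ C = ⋃ g : Γ, ({x : α.X | x ∈ C ∧ gs x = g} ∩
          (fun x : α.X => Real.arctan (e (α.smul g x))) ⁻¹' B) := by
        ext x
        simp only [Set.mem_inter_iff, Set.mem_preimage, Set.mem_iUnion, Set.mem_setOf_eq]
        constructor
        · rintro ⟨hxB, hxC⟩
          refine ⟨gs x, ⟨hxC, rfl⟩, ?_⟩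
          simpa only [F, if_pos hxC] using hxB
        · rintro ⟨g, ⟨hxC, rfl⟩, hxB⟩
          refine ⟨?_, hxC⟩
          simpa only [F, if_pos hxC] using hxB
      rw [heq]
      refine .iUnion fun g => (hSg g).inter ?_
      have hm : Measurable fun x : α.X => Real.arctan (e (α.smul g x)) :=
        Real.continuous_arctan.measurable.comp (he.measurable.comp (α.cont g).measurable)
      exact (hm hB).baireMeasurableSet
    refine hkey.congr (Filter.eventuallyEq_of_mem hC fun x hx => ?_)
    show (x ∈ F ⁻¹' B ∩ C) = (x ∈ F ⁻¹' B)
    simp [Set.mem_inter_iff, hx]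
  exact ⟨F, hF, hFiff⟩


end DescColor
end

section
/- Let Γ be a countably infinite group with a proper right-invariant metric d. Let (d₀, d₁, …) be a sequence in [0, ∞) such that the closed ball B(1, d₀) contains at least 2 elements and, for each c ∈ ℕ, the closed ball B(1, d_{c+1}) contains two disjoint closed balls of radius d_c. Suppose ω : Γ → ℕ is a coloring such that for every c ∈ ℕ and all distinct γ, δ ∈ Γ with ω(γ) = ω(δ) = c one has d(γ, δ) > 2·d_c. Then ω uses infinitely many colors, i.e., the set {ω(γ) : γ ∈ Γ} is infinite. -/
open Set Function Topology

namespace DescColor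

variable {Γ : Type*}

/-- Lemma on colorings with growing separation: if color `c` appears with pairwise
distances `> 2 d c`, and balls grow suitably, then infinitely many colors are used. -/
theorem stmt9 {Γ : Type*} [Group Γ] [Countable Γ] [Infinite Γ] [MetricSpace Γ]
    (hinv : ∀ γ δ g : Γ, dist (γ * g) (δ * g) = dist γ δ)
    (hproper : ∀ (γ : Γ) (r : ℝ), (Metric.closedBall γ r).Finite)
    (d : ℕ → ℝ) (hd : ∀ c, 0 ≤ d c)
    (h0 : ∃ γ δ : Γ, γ ≠ δ ∧ γ ∈ Metric.closedBall (1 : Γ) (d 0) ∧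
      δ ∈ Metric.closedBall (1 : Γ) (d 0))
    (hstep : ∀ c : ℕ, ∃ γ δ : Γ,
      Metric.closedBall γ (d c) ⊆ Metric.closedBall (1 : Γ) (d (c + 1)) ∧
      Metric.closedBall δ (d c) ⊆ Metric.closedBall (1 : Γ) (d (c + 1)) ∧
      Disjoint (Metric.closedBall γ (d c)) (Metric.closedBall δ (d c)))
    (ω : Γ → ℕ)
    (hsep : ∀ (c : ℕ) (γ δ : Γ), γ ≠ δ → ω γ = c → ω δ = c → 2 * d c < dist γ δ) :
    (Set.range ω).Infinite := by
  -- translation helper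
  have htrans : ∀ a γ x : Γ, dist x (a * γ) = dist (x * γ⁻¹) a := by
    intro a γ x
    have := hinv (x * γ⁻¹) a γ
    simpa [mul_assoc] using this
  -- key claim: every ball of radius `d c` contains two distinct points of color ≥ c
  have key : ∀ (c : ℕ) (γ : Γ), ∃ p q : Γ, p ≠ q ∧ dist p γ ≤ d c ∧ dist q γ ≤ d c ∧
      c ≤ ω p ∧ c ≤ ω q := by
    intro c
    induction c with
    | zero =>
      intro γ
      obtain ⟨a, b, hab, ha, hb⟩ := h0
      have ha' : dist a 1 ≤ d 0 := Metric.mem_closedBall.mp ha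
      have hb' : dist b 1 ≤ d 0 := Metric.mem_closedBall.mp hb
      refine ⟨a * γ, b * γ, fun h => hab (mul_right_cancel h), ?_, ?_, Nat.zero_le _,
        Nat.zero_le _⟩
      · calc dist (a * γ) γ = dist (a * γ) (1 * γ) := by rw [one_mul]
          _ = dist a 1 := hinv a 1 γ
          _ ≤ d 0 := ha'
      · calc dist (b * γ) γ = dist (b * γ) (1 * γ) := by rw [one_mul]
          _ = dist b 1 := hinv b 1 γ
          _ ≤ d 0 := hb'
    | succ c ih =>
      intro γ
      obtain ⟨a, b, hsa, hsb, hdisj⟩ := hstep c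
      -- from two distinct points of color ≥ c in a ball of radius `d c`,
      -- extract one point of color ≥ c+1
      have pick : ∀ p q z : Γ, p ≠ q → dist p z ≤ d c → dist q z ≤ d c →
          c ≤ ω p → c ≤ ω q → ∃ r : Γ, dist r z ≤ d c ∧ c + 1 ≤ ω r := by
        intro p q z hne hp hq hcp hcq
        by_cases h : ω p = c
        · refine ⟨q, hq, ?_⟩
          rcases Nat.lt_or_ge (ω q) (c + 1) with h' | h'
          · have hqc : ω q = c := le_antisymm (Nat.lt_succ_iff.mp h') hcq
            have hfar := hsep c p q hne h hqc
            have hclose : dist p q ≤ 2 * d c := by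
              calc dist p q ≤ dist p z + dist q z := dist_triangle_right _ _ _
                _ ≤ 2 * d c := by linarith
            linarith
          · exact h'
        · exact ⟨p, hp, Nat.lt_of_le_of_ne hcp (Ne.symm h)⟩
      obtain ⟨p₁, q₁, hne₁, hp₁, hq₁, hcp₁, hcq₁⟩ := ih (a * γ)
      obtain ⟨p₂, q₂, hne₂, hp₂, hq₂, hcp₂, hcq₂⟩ := ih (b * γ)
      obtain ⟨r₁, hr₁, hcr₁⟩ := pick p₁ q₁ (a * γ) hne₁ hp₁ hq₁ hcp₁ hcq₁
      obtain ⟨r₂, hr₂, hcr₂⟩ := pick p₂ q₂ (b * γ) hne₂ hp₂ hq₂ hcp₂ hcq₂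
      have hm₁ : r₁ * γ⁻¹ ∈ Metric.closedBall a (d c) := by
        rw [Metric.mem_closedBall, ← htrans a γ r₁]; exact hr₁
      have hm₂ : r₂ * γ⁻¹ ∈ Metric.closedBall b (d c) := by
        rw [Metric.mem_closedBall, ← htrans b γ r₂]; exact hr₂
      have hne : r₁ ≠ r₂ := by
        intro h
        exact hdisj.ne_of_mem hm₁ hm₂ (by rw [h])
      have hmem : ∀ x : Γ, x * γ⁻¹ ∈ Metric.closedBall (1 : Γ) (d (c + 1)) →
          dist x γ ≤ d (c + 1) := by
        intro x hx
        have hx' : dist (x * γ⁻¹) 1 ≤ d (c + 1) := Metric.mem_closedBall.mp hx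
        calc dist x γ = dist (x * γ⁻¹ * γ) (1 * γ) := by
              rw [one_mul, inv_mul_cancel_right]
          _ = dist (x * γ⁻¹) 1 := hinv _ _ γ
          _ ≤ d (c + 1) := hx'
      exact ⟨r₁, r₂, hne, hmem r₁ (hsa hm₁), hmem r₂ (hsb hm₂), hcr₁, hcr₂⟩
  -- conclude
  intro hfin
  obtain ⟨N, hN⟩ := hfin.bddAbove
  obtain ⟨p, _, _, _, hcp, _⟩ := key (N + 1) 1
  have : ω p ≤ N := hN ⟨p, rfl⟩
  omega

end DescColor
end
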